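/- Let K be a field of characteristic 2, let A be the quotient of the free associative K-algebra K⟨a, b⟩ by the two-sided ideal generated by a², b² − b, and ab − ba − a, and let ω be the two-sided ideal of A generated by the images of a and b. Then ω does not satisfy the Engel condition: for every m ≥ 1 there exist x, y ∈ ω with the left-normed iterated commutator [x,ₘy] ≠ 0. -/

import Mathlib

/-- The two-sided ideal of the free associative algebra `K⟨a, b⟩` generated by the
relations `a²`, `b² − b` and `ab − ba − a` (where `a, b` are the two generators). -/
noncomputable def relationsIdeal (K : Type*) [Field K] :
    TwoSidedIdeal (FreeAlgebra K (Fin 2)) :=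
  TwoSidedIdeal.span
    {FreeAlgebra.ι K 0 * FreeAlgebra.ι K 0,
     FreeAlgebra.ι K 1 * FreeAlgebra.ι K 1 - FreeAlgebra.ι K 1,
     FreeAlgebra.ι K 0 * FreeAlgebra.ι K 1 - FreeAlgebra.ι K 1 * FreeAlgebra.ι K 0
       - FreeAlgebra.ι K 0}

/-- The algebra `A = K⟨a, b⟩ / (a², b² − b, ab − ba − a)`, i.e. the restricted enveloping
algebra of the 2-dimensional restricted Lie algebra with `[a,b] = a`, `a^[2] = 0`,
`b^[2] = b`. -/
noncomputable abbrev EnvAlgebra (K : Type*) [Field K] :=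
  (relationsIdeal K).ringCon.Quotient

/-- The image of the generator `a` in `A`. -/
noncomputable def abar (K : Type*) [Field K] : EnvAlgebra K :=
  (relationsIdeal K).ringCon.mk' (FreeAlgebra.ι K 0)

/-- The image of the generator `b` in `A`. -/
noncomputable def bbar (K : Type*) [Field K] : EnvAlgebra K :=
  (relationsIdeal K).ringCon.mk' (FreeAlgebra.ι K 1)

/-- The two-sided ideal `ω` of `A` generated by the images of `a` and `b`
(the augmentation ideal of the restricted enveloping algebra). -/
noncomputable def omegaIdeal (K : Type*) [Field K] : TwoSidedIdeal (EnvAlgebra K) :=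
  TwoSidedIdeal.span {abar K, bbar K}

/-- The left-normed iterated commutator `[x,ₘ y]` with `m` copies of `y`,
where `[a, b] = a * b - b * a`. -/
noncomputable def engelComm {R : Type*} [Ring R] (x y : R) : ℕ → R
  | 0 => x
  | m + 1 => engelComm x y m * y - y * engelComm x y m

section Aux

variable (K : Type*) [Field K]

/-- The matrix `E₁₂`. -/
def repM1 : Matrix (Fin 2) (Fin 2) K := ![![0, 1], ![0, 0]]

/-- The matrix `E₂₂`. -/
def repM2 : Matrix (Fin 2) (Fin 2) K := ![![0, 0], ![0, 1]]

/-- A representation of the free algebra on 2×2 matrices, sending `a ↦ E₁₂`, `b ↦ E₂₂`. -/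
noncomputable def repHom : FreeAlgebra K (Fin 2) →ₐ[K] Matrix (Fin 2) (Fin 2) K :=
  FreeAlgebra.lift K ![repM1 K, repM2 K]

lemma rep_rel1 : repHom K (FreeAlgebra.ι K 0 * FreeAlgebra.ι K 0) = 0 := by
  simp only [map_mul, repHom, FreeAlgebra.lift_ι_apply]
  ext i j
  fin_cases i <;> fin_cases j <;>
    simp only [Matrix.mul_apply, Fin.sum_univ_two, repM1, Matrix.cons_val_zero, Matrix.cons_val_one] <;> simp

lemma rep_rel2 : repHom K (FreeAlgebra.ι K 1 * FreeAlgebra.ι K 1 - FreeAlgebra.ι K 1) = 0 := by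
  simp only [map_sub, map_mul, repHom, FreeAlgebra.lift_ι_apply]
  ext i j
  fin_cases i <;> fin_cases j <;>
    simp only [Matrix.sub_apply, Matrix.mul_apply, Fin.sum_univ_two, repM2, Matrix.cons_val_zero, Matrix.cons_val_one] <;> simp

lemma rep_rel3 :
    repHom K (FreeAlgebra.ι K 0 * FreeAlgebra.ι K 1 - FreeAlgebra.ι K 1 * FreeAlgebra.ι K 0
      - FreeAlgebra.ι K 0) = 0 := by
  simp only [map_sub, map_mul, repHom, FreeAlgebra.lift_ι_apply]
  ext i j
  fin_cases i <;> fin_cases j <;>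
    simp only [Matrix.sub_apply, Matrix.mul_apply, Fin.sum_univ_two, repM1, repM2, Matrix.cons_val_zero, Matrix.cons_val_one] <;> simp

lemma abar_ne_zero : abar K ≠ 0 := by
  intro h
  have hmem : FreeAlgebra.ι K 0 ∈ relationsIdeal K := by
    have : (relationsIdeal K).ringCon (FreeAlgebra.ι K 0) 0 := by
      exact ((relationsIdeal K).ringCon.eq).mp h
    rwa [TwoSidedIdeal.rel_iff, sub_zero] at this
  have hker : FreeAlgebra.ι K 0 ∈ TwoSidedIdeal.ker (repHom K) := by
    refine TwoSidedIdeal.mem_span_iff.mp hmem _ ?_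
    intro x hx
    rcases hx with h1 | h2 | h3
    · rw [SetLike.mem_coe, TwoSidedIdeal.mem_ker, h1]; exact rep_rel1 K
    · rw [SetLike.mem_coe, TwoSidedIdeal.mem_ker, h2]; exact rep_rel2 K
    · rw [SetLike.mem_coe, TwoSidedIdeal.mem_ker, Set.mem_singleton_iff.mp h3]; exact rep_rel3 K
  rw [TwoSidedIdeal.mem_ker] at hker
  have : repHom K (FreeAlgebra.ι K 0) = repM1 K := by
    simp [repHom, FreeAlgebra.lift_ι_apply]
  rw [this] at hker
  have := congrFun (congrFun hker 0) 1
  simp [repM1] at this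

lemma comm_rel : abar K * bbar K - bbar K * abar K = abar K := by
  rw [abar, bbar, ← map_mul, ← map_mul, ← map_sub]
  have : (relationsIdeal K).ringCon
      (FreeAlgebra.ι K 0 * FreeAlgebra.ι K 1 - FreeAlgebra.ι K 1 * FreeAlgebra.ι K 0)
      (FreeAlgebra.ι K 0) := by
    rw [TwoSidedIdeal.rel_iff]
    exact TwoSidedIdeal.subset_span (by simp)
  exact ((relationsIdeal K).ringCon.eq).mpr this

end Aux

/-- Example 1.5: if `K` has characteristic `2`, then `ω` does not satisfy the Engel
condition: for every `m ≥ 1` there are `x, y ∈ ω` with `[x,ₘ y] ≠ 0`. -/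
theorem omega_not_engel (K : Type*) [Field K] [CharP K 2] :
    ∀ m : ℕ, 1 ≤ m → ∃ x y : EnvAlgebra K,
      x ∈ omegaIdeal K ∧ y ∈ omegaIdeal K ∧ engelComm x y m ≠ 0 := by
  intro m _
  refine ⟨abar K, bbar K, TwoSidedIdeal.subset_span (by simp),
    TwoSidedIdeal.subset_span (by simp), ?_⟩
  have key : ∀ n : ℕ, engelComm (abar K) (bbar K) n = abar K := by
    intro n
    induction n with
    | zero => rfl
    | succ n ih => rw [engelComm, ih, comm_rel]
  rw [key m]
  exact abar_ne_zero K
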